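/- arXiv:1105.1349 — 3 statements merged into one kernel-verified Lean document; each statement's English description precedes it below -/
import Mathlib

section
/- Let B ⊆ ℂ be open and connected, and let u : 𝕋_h × B → ℂ be analytic with Du = 0. Then there exists a unique analytic function c : ⋃_{τ∈B} (τ + 𝕋_h) → ℂ (the domain taken as a subset of ℂ/2πℤ) such that u(φ,τ) = c(τ − φ) for all (φ,τ) ∈ 𝕋_h × B. -/
noncomputable section
open Complex Set

def Strip (h : ℝ) : Set ℂ := {z : ℂ | |z.im| < h}

/-!
Along the characteristics `τ - φ = s` the equation `Du = 0` makes `u` constant, so for each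
`τ ∈ B` the function `c_τ s := u (τ - s, τ)` is the only candidate for `c` on the band `τ + 𝕋_h`.
Nearby parameters give the same candidate (mean value theorem in `τ`, then the identity theorem
in `s`), and connectedness of `B` links any two parameters by a chain of such steps. The bands
are horizontal, so only the heights `Im τ` matter: in a chain of heights with steps `< 2h`,
two ends whose bands meet can always be joined through an intermediate index whose band meets
both, and the identity theorem on the convex overlap transports equality along this
shortening. The glued `c` is read off from a parameter depending on `Im s` only, which makes it
`2π`-periodic with `u`.
-/

open Metric Filter Relation Topology

theorem AnalyticOnNhd.eqOn_inter_of_eqOn_inter {𝕜 E F : Type*} [NontriviallyNormedField 𝕜]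
    [NormedAddCommGroup E] [NormedSpace 𝕜 E] [NormedAddCommGroup F] [NormedSpace 𝕜 F]
    {f g k : E → F} {U V W : Set E} (hf : AnalyticOnNhd 𝕜 f U) (hk : AnalyticOnNhd 𝕜 k W)
    (hU : IsOpen U) (hV : IsOpen V) (hW : IsOpen W) (hUW : IsPreconnected (U ∩ W))
    (hUVW : (U ∩ V ∩ W).Nonempty) (hfg : EqOn f g (U ∩ V)) (hgk : EqOn g k (V ∩ W)) :
    EqOn f k (U ∩ W) := by
  obtain ⟨z, ⟨hzU, hzV⟩, hzW⟩ := hUVW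
  refine (hf.mono inter_subset_left).eqOn_of_preconnected_of_eventuallyEq
    (hk.mono inter_subset_right) hUW ⟨hzU, hzW⟩ ?_
  filter_upwards [((hU.inter hV).inter hW).mem_nhds ⟨⟨hzU, hzV⟩, hzW⟩] with x ⟨⟨hxU, hxV⟩, hxW⟩
  exact (hfg ⟨hxU, hxV⟩).trans (hgk ⟨hxV, hxW⟩)

theorem Relation.ReflTransGen.exists_seq {α : Type*} {r : α → α → Prop} {x y : α}
    (hxy : ReflTransGen r x y) (hy : r y y) :
    ∃ (f : ℕ → α) (n : ℕ), f 0 = x ∧ f n = y ∧ ∀ k, r (f k) (f (k + 1)) := by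
  induction hxy using ReflTransGen.head_induction_on with
  | refl => exact ⟨fun _ => y, 0, rfl, rfl, fun _ => hy⟩
  | @head a b hab _ ih =>
    obtain ⟨f, n, hf0, hfn, hf⟩ := ih
    refine ⟨fun k => if k = 0 then a else f (k - 1), n + 1, rfl, by simpa using hfn, ?_⟩
    rintro (_ | k)
    · simpa [hf0] using hab
    · simpa using hf k

theorem exists_between_of_abs_sub_lt {a : ℕ → ℝ} {r : ℝ} (hstep : ∀ k, |a (k + 1) - a k| < r)
    {i j : ℕ} (hij : i + 1 < j) (hclose : |a i - a j| < r) :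
    ∃ m, i < m ∧ m < j ∧ |a i - a m| < r ∧ |a m - a j| < r := by
  wlog hle : a i ≤ a j generalizing a
  · obtain ⟨m, him, hmj, h₁, h₂⟩ := this (a := fun k => -a k)
      (fun k => by simpa only [neg_sub_neg, abs_sub_comm] using hstep k)
      (by simpa only [neg_sub_neg, abs_sub_comm] using hclose) (by linarith)
    exact ⟨m, him, hmj, by simpa only [neg_sub_neg, abs_sub_comm] using h₁,
      by simpa only [neg_sub_neg, abs_sub_comm] using h₂⟩
  classical
  rw [abs_sub_lt_iff] at hclose
  -- the first index after `i` whose value exceeds `a j - r`; `j - 1` is a candidate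
  have hj : i < j - 1 ∧ a j - r < a (j - 1) := by
    refine ⟨by omega, ?_⟩
    have := hstep (j - 1)
    rw [Nat.sub_add_cancel (by omega), abs_sub_lt_iff] at this
    linarith
  have hex : ∃ k, i < k ∧ a j - r < a k := ⟨j - 1, hj⟩
  obtain ⟨him, hm⟩ := Nat.find_spec hex
  set m := Nat.find hex
  have hmj : m < j := (Nat.find_min' hex hj).trans_lt (by omega)
  have hm_lt : a m < a i + r := by
    rcases (show m = i + 1 ∨ i < m - 1 by omega) with h₁ | h₁
    · have := hstep i
      rw [← h₁, abs_sub_lt_iff] at this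
      linarith
    · have hprev := not_lt.mp (not_and.mp (Nat.find_min hex (show m - 1 < m by omega)) h₁)
      have := hstep (m - 1)
      rw [Nat.sub_add_cancel (by omega), abs_sub_lt_iff] at this
      linarith
  refine ⟨m, him, hmj, ?_, ?_⟩ <;> rw [abs_sub_lt_iff] <;> constructor <;> linarith

def imBand (y h : ℝ) : Set ℂ := im ⁻¹' ball y h

section imBand

variable {y h : ℝ}

theorem mem_imBand {s : ℂ} : s ∈ imBand y h ↔ |s.im - y| < h := Iff.rfl

theorem isOpen_imBand : IsOpen (imBand y h) := isOpen_ball.preimage continuous_im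

theorem convex_imBand : Convex ℝ (imBand y h) := (convex_ball y h).linear_preimage imLm

theorem sub_mem_strip_iff {s τ : ℂ} : s - τ ∈ Strip h ↔ s ∈ imBand τ.im h := by
  simp [Strip, mem_imBand]

theorem sub_mem_strip_iff' {s τ : ℂ} : τ - s ∈ Strip h ↔ s ∈ imBand τ.im h := by
  rw [← sub_mem_strip_iff]; simp [Strip, abs_sub_comm]

theorem mem_imBand_of_dist_lt {s τ : ℂ} (hsτ : dist s τ < h) : s ∈ imBand τ.im h :=
  sub_mem_strip_iff.mp ((abs_im_le_norm _).trans_lt (dist_eq_norm s τ ▸ hsτ))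

theorem abs_sub_lt_of_mem_imBand_inter {a b : ℝ} {s : ℂ} (hs : s ∈ imBand a h ∩ imBand b h) :
    |a - b| < 2 * h := by
  obtain ⟨ha, hb⟩ := hs
  rw [mem_imBand, abs_sub_lt_iff] at ha hb
  rw [abs_sub_lt_iff]; constructor <;> linarith

theorem imBand_inter_inter_nonempty {a b c : ℝ} (hab : |a - b| < 2 * h) (hbc : |b - c| < 2 * h)
    (hac : |a - c| < 2 * h) : (imBand a h ∩ imBand b h ∩ imBand c h).Nonempty := by
  obtain ⟨y, hya, hyb, hyc⟩ : ∃ y : ℝ, |y - a| < h ∧ |y - b| < h ∧ |y - c| < h := by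
    refine ⟨(max a (max b c) + min a (min b c)) / 2, ?_, ?_, ?_⟩ <;>
      rw [abs_sub_lt_iff] at * <;> grind
  exact ⟨y * I, ⟨by simpa [mem_imBand] using hya, by simpa [mem_imBand] using hyb⟩,
    by simpa [mem_imBand] using hyc⟩

theorem eqOn_imBand_of_chain {a : ℕ → ℝ} {g : ℕ → ℂ → ℂ}
    (hg : ∀ k, AnalyticOnNhd ℂ (g k) (imBand (a k) h)) (hstep : ∀ k, |a (k + 1) - a k| < 2 * h)
    (hagree : ∀ k, EqOn (g k) (g (k + 1)) (imBand (a k) h ∩ imBand (a (k + 1)) h))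
    {i j : ℕ} (hij : i ≤ j) : EqOn (g i) (g j) (imBand (a i) h ∩ imBand (a j) h) := by
  induction hn : j - i using Nat.strong_induction_on generalizing i j with
  | _ n ih =>
  rcases (show j = i ∨ j = i + 1 ∨ i + 1 < j by omega) with rfl | rfl | hlt
  · exact fun _ _ => rfl
  · exact hagree i
  intro s hs
  have hij' := abs_sub_lt_of_mem_imBand_inter hs
  obtain ⟨m, him, hmj, him', hmj'⟩ := exists_between_of_abs_sub_lt hstep hlt hij'
  exact (hg i).eqOn_inter_of_eqOn_inter (hg j) isOpen_imBand isOpen_imBand isOpen_imBand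
    (convex_imBand.inter convex_imBand).isPreconnected
    (imBand_inter_inter_nonempty him' hmj' hij')
    (ih (m - i) (by omega) him.le rfl) (ih (j - m) (by omega) hmj.le rfl) hs

end imBand

def profile (u : ℂ → ℂ → ℂ) (τ s : ℂ) : ℂ := u (τ - s) τ

section profile

variable {h : ℝ} {B : Set ℂ} {u : ℂ → ℂ → ℂ}

theorem hasDerivAt_along_characteristic {s τ : ℂ}
    (hu : DifferentiableAt ℂ (fun p : ℂ × ℂ => u p.1 p.2) (τ - s, τ)) :
    HasDerivAt (fun t => u (t - s) t)
      (deriv (fun x => u x τ) (τ - s) + deriv (fun y => u (τ - s) y) τ) τ := by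
  set L := fderiv ℂ (fun p : ℂ × ℂ => u p.1 p.2) (τ - s, τ)
  have hL : HasFDerivAt (fun p : ℂ × ℂ => u p.1 p.2) L (τ - s, τ) := hu.hasFDerivAt
  have h₁ : HasDerivAt (fun x => u x τ) (L (1, 0)) (τ - s) :=
    hL.comp_hasDerivAt (τ - s) (f := fun x => (x, τ))
      ((hasDerivAt_id _).prodMk (hasDerivAt_const _ _))
  have h₂ : HasDerivAt (fun y => u (τ - s) y) (L (0, 1)) τ :=
    hL.comp_hasDerivAt τ (f := fun y => (τ - s, y))
      ((hasDerivAt_const _ _).prodMk (hasDerivAt_id _))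
  have h₃ : HasDerivAt (fun t => u (t - s) t) (L (1, 1)) τ :=
    hL.comp_hasDerivAt τ (f := fun t => (t - s, t))
      (((hasDerivAt_id _).sub_const s).prodMk (hasDerivAt_id _))
  rwa [h₁.deriv, h₂.deriv, ← map_add, Prod.mk_add_mk, add_zero, zero_add]

theorem analyticOnNhd_profile
    (huan : AnalyticOnNhd ℂ (fun p : ℂ × ℂ => u p.1 p.2) (Strip h ×ˢ B)) {τ : ℂ} (hτ : τ ∈ B) :
    AnalyticOnNhd ℂ (profile u τ) (imBand τ.im h) :=
  huan.comp ((analyticOnNhd_const.sub analyticOnNhd_id).prod analyticOnNhd_const)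
    fun _ hs => ⟨sub_mem_strip_iff'.mpr hs, hτ⟩

theorem eventually_profile_eqOn (hh : 0 < h) (hB : IsOpen B)
    (huan : AnalyticOnNhd ℂ (fun p : ℂ × ℂ => u p.1 p.2) (Strip h ×ˢ B))
    (hD : ∀ φ ∈ Strip h, ∀ τ ∈ B,
      deriv (fun x => u x τ) φ + deriv (fun x => u φ x) τ = 0) {τ : ℂ} (hτ : τ ∈ B) :
    ∀ᶠ τ' in 𝓝 τ, τ' ∈ B ∧ |τ'.im - τ.im| < 2 * h ∧
      EqOn (profile u τ) (profile u τ') (imBand τ.im h ∩ imBand τ'.im h) := by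
  obtain ⟨ε, hε, hball⟩ := Metric.isOpen_iff.mp hB τ hτ
  set r := min ε h
  have hr : 0 < r := lt_min hε hh
  filter_upwards [ball_mem_nhds τ (half_pos hr)] with τ' hτ'
  rw [mem_ball] at hτ'
  have hτ'B : τ' ∈ B := hball (mem_ball.mpr (by linarith [min_le_left ε h]))
  have hττ' : τ ∈ imBand τ.im h ∩ imBand τ'.im h :=
    ⟨mem_imBand_of_dist_lt (by simpa using hh),
      mem_imBand_of_dist_lt (by rw [dist_comm]; linarith [min_le_right ε h])⟩
  -- for `s` near `τ`, `t ↦ u (t - s) t` has zero derivative on a convex set containing `τ, τ'`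
  have hnear : ∀ s ∈ ball τ (r / 2), profile u τ s = profile u τ' s := by
    intro s hs
    rw [mem_ball] at hs
    have hW : IsOpen (ball τ r ∩ imBand s.im h) := isOpen_ball.inter isOpen_imBand
    have hderiv : ∀ t ∈ ball τ r ∩ imBand s.im h, HasDerivAt (fun t => u (t - s) t) 0 t := by
      rintro t ⟨htτ, hts⟩
      have hmem : (t - s, t) ∈ Strip h ×ˢ B :=
        ⟨sub_mem_strip_iff.mpr hts, hball (ball_subset_ball (min_le_left ε h) htτ)⟩
      simpa [hD _ hmem.1 _ hmem.2] using
        hasDerivAt_along_characteristic (huan _ hmem).differentiableAt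
    refine hW.is_const_of_deriv_eq_zero ((convex_ball τ r).inter convex_imBand).isPreconnected
      (fun t ht => (hderiv t ht).differentiableAt.differentiableWithinAt)
      (fun t ht => (hderiv t ht).deriv) ⟨mem_ball_self hr, ?_⟩ ⟨?_, ?_⟩
    · exact mem_imBand_of_dist_lt (by rw [dist_comm]; linarith [min_le_right ε h])
    · exact mem_ball.mpr (by linarith)
    · refine mem_imBand_of_dist_lt ?_
      linarith [dist_triangle τ' τ s, dist_comm s τ, min_le_right ε h]
  refine ⟨hτ'B, by rw [abs_sub_comm]; exact abs_sub_lt_of_mem_imBand_inter hττ', ?_⟩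
  have han : AnalyticOnNhd ℂ (profile u τ) (imBand τ.im h ∩ imBand τ'.im h) :=
    (analyticOnNhd_profile huan hτ).mono inter_subset_left
  exact han.eqOn_of_preconnected_of_eventuallyEq
    ((analyticOnNhd_profile huan hτ'B).mono inter_subset_right)
    (convex_imBand.inter convex_imBand).isPreconnected hττ'
    (eventuallyEq_of_mem (ball_mem_nhds τ (half_pos hr)) hnear)

theorem profile_eqOn (hh : 0 < h) (hB : IsOpen B) (hBconn : IsPreconnected B)
    (huan : AnalyticOnNhd ℂ (fun p : ℂ × ℂ => u p.1 p.2) (Strip h ×ˢ B))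
    (hD : ∀ φ ∈ Strip h, ∀ τ ∈ B,
      deriv (fun x => u x τ) φ + deriv (fun x => u φ x) τ = 0)
    {τ τ' : ℂ} (hτ : τ ∈ B) (hτ' : τ' ∈ B) :
    EqOn (profile u τ) (profile u τ') (imBand τ.im h ∩ imBand τ'.im h) := by
  let R : ℂ → ℂ → Prop := fun σ σ' => σ' ∈ B ∧ |σ'.im - σ.im| < 2 * h ∧
    EqOn (profile u σ) (profile u σ') (imBand σ.im h ∩ imBand σ'.im h)
  have hchain : ReflTransGen R τ τ' := by
    refine hBconn.induction₂' _ (fun σ hσ => ?_) (fun _ _ _ _ _ _ => ReflTransGen.trans) hτ hτ'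
    filter_upwards [nhdsWithin_le_nhds (eventually_profile_eqOn hh hB huan hD hσ)]
      with σ' ⟨hσ'B, hclose, hagree⟩
    refine ⟨.single ⟨hσ'B, hclose, hagree⟩, .single ⟨hσ, by rwa [abs_sub_comm], ?_⟩⟩
    rw [inter_comm]; exact hagree.symm
  obtain ⟨f, n, rfl, rfl, hf⟩ :=
    hchain.exists_seq ⟨hτ', by simpa using hh, fun _ _ => rfl⟩
  have hfB : ∀ k, f k ∈ B := by
    rintro (_ | k)
    exacts [hτ, (hf k).1]
  exact eqOn_imBand_of_chain (a := fun k => (f k).im) (g := fun k => profile u (f k))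
    (fun k => analyticOnNhd_profile huan (hfB k)) (fun k => (hf k).2.1) (fun k => (hf k).2.2)
    n.zero_le

end profile

/-- Functions on `ℂ/2πℤ` are encoded as `2π`-periodic functions on `ℂ`. -/
theorem statement14 (h : ℝ) (hh : 0 < h) (B : Set ℂ) (hB : IsOpen B)
    (hBconn : IsConnected B) (u : ℂ → ℂ → ℂ)
    (huper : ∀ φ τ, u (φ + 2 * Real.pi) τ = u φ τ)
    (huan : AnalyticOnNhd ℂ (fun p : ℂ × ℂ => u p.1 p.2) (Strip h ×ˢ B))
    (hD : ∀ φ ∈ Strip h, ∀ τ ∈ B,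
      deriv (fun x => u x τ) φ + deriv (fun x => u φ x) τ = 0) :
    ∃ c : ℂ → ℂ,
      (∀ s, c (s + 2 * Real.pi) = c s) ∧
      AnalyticOnNhd ℂ c {s : ℂ | ∃ τ ∈ B, s - τ ∈ Strip h} ∧
      (∀ φ ∈ Strip h, ∀ τ ∈ B, u φ τ = c (τ - φ)) ∧
      ∀ c' : ℂ → ℂ,
        (∀ s, c' (s + 2 * Real.pi) = c' s) →
        AnalyticOnNhd ℂ c' {s : ℂ | ∃ τ ∈ B, s - τ ∈ Strip h} →
        (∀ φ ∈ Strip h, ∀ τ ∈ B, u φ τ = c' (τ - φ)) →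
        EqOn c' c {s : ℂ | ∃ τ ∈ B, s - τ ∈ Strip h} := by
  let σ : ℝ → ℂ := fun y => Classical.epsilon fun τ => τ ∈ B ∧ |y - τ.im| < h
  let c : ℂ → ℂ := fun s => profile u (σ s.im) s
  have hc : ∀ τ ∈ B, EqOn c (profile u τ) (imBand τ.im h) := by
    intro τ hτ s hs
    obtain ⟨hσB, hσs⟩ := Classical.epsilon_spec (p := fun τ => τ ∈ B ∧ |s.im - τ.im| < h)
      ⟨τ, hτ, hs⟩
    exact profile_eqOn hh hB hBconn.isPreconnected huan hD hσB hτ ⟨hσs, hs⟩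
  refine ⟨c, fun s => ?_, ?_, ?_, ?_⟩
  · have him : (s + 2 * Real.pi : ℂ).im = s.im := by simp
    simp only [c, profile, him]
    rw [← huper (σ s.im - (s + 2 * Real.pi))]
    ring_nf
  · rintro s ⟨τ, hτ, hs⟩
    rw [sub_mem_strip_iff] at hs
    exact (analyticOnNhd_profile huan hτ s hs).congr
      (eventuallyEq_of_mem (isOpen_imBand.mem_nhds hs) (hc τ hτ)).symm
  · intro φ hφ τ hτ
    rw [hc τ hτ (sub_mem_strip_iff'.mp (by simpa using hφ)), profile, sub_sub_cancel]
  · rintro c' - - hc' s ⟨τ, hτ, hs⟩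
    rw [sub_mem_strip_iff] at hs
    have := hc' (τ - s) (sub_mem_strip_iff'.mpr hs) τ hτ
    rw [sub_sub_cancel] at this
    rw [← this, hc τ hτ hs, profile]
end
end

section
/- Let p ≥ 1. There exists a constant K_p > 0, depending only on p and θ, such that for every r > 0 and every τ ∈ D_r^−, ∫_{−∞}^0 |τ + s|^{−(p+1)} ds ≤ K_p |τ|^{−p}. -/
/-!
For `s ≤ 0`, `‖τ + s‖² = ‖τ‖² + 2 s Re τ + s²`. If `Re τ ≤ κ ‖τ‖` with `0 ≤ κ < 1`, then
`2 s Re τ ≥ 2 s κ ‖τ‖ ≥ -κ (‖τ‖² + s²)`, so `‖τ + s‖² ≥ (1 - κ)(‖τ‖² + s²)`: the integral is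
dominated by `(1 - κ)^{-(p+1)/2} ∫ (‖τ‖² + s²)^{-(p+1)/2} ds`, and since `p ≥ 1` this is at most
`(1 - κ)^{-(p+1)/2} ‖τ‖^{1-p} ∫ (‖τ‖² + s²)⁻¹ ds = π (1 - κ)^{-(p+1)/2} ‖τ‖^{-p}`.
On `D_r^−` one can take `κ = cos θ`: writing `w = τ + r`, `Re w = ‖w‖ cos (arg w) ≤ ‖w‖ cos θ`,
and `‖w‖ ≤ ‖τ‖ + r` then gives `Re τ ≤ cos θ ‖τ‖`.
-/

noncomputable section
open Complex Set MeasureTheory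

def Dminus (θ r : ℝ) : Set ℂ := {τ : ℂ | θ < |(τ + (r:ℂ)).arg|}

lemma ne_zero_of_mem_Dminus {θ r : ℝ} (hθ : 0 ≤ θ) (hr : 0 ≤ r) {τ : ℂ}
    (hτ : τ ∈ Dminus θ r) : τ ≠ 0 := by
  rintro rfl
  simp [Dminus, arg_ofReal_of_nonneg hr] at hτ
  linarith

lemma re_le_cos_mul_norm_of_mem_Dminus {θ r : ℝ} (hθ : 0 ≤ θ) (hθ' : θ ≤ Real.pi / 2)
    (hr : 0 ≤ r) {τ : ℂ} (hτ : τ ∈ Dminus θ r) : τ.re ≤ Real.cos θ * ‖τ‖ := by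
  set w := τ + (r : ℂ) with hw
  have hcos : Real.cos w.arg ≤ Real.cos θ := by
    rw [← Real.cos_abs]
    exact Real.cos_le_cos_of_nonneg_of_le_pi hθ (abs_arg_le_pi w) hτ.le
  have hw_re : τ.re + r ≤ ‖w‖ * Real.cos θ :=
    calc τ.re + r = ‖w‖ * Real.cos w.arg := by rw [norm_mul_cos_arg]; simp [hw]
      _ ≤ ‖w‖ * Real.cos θ := by gcongr
  have hw_norm : ‖w‖ ≤ ‖τ‖ + r := by
    simpa [abs_of_nonneg hr] using norm_add_le τ (r : ℂ)
  have hcos_nonneg : 0 ≤ Real.cos θ := Real.cos_nonneg_of_mem_Icc ⟨by linarith, hθ'⟩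
  nlinarith [Real.cos_le_one θ]

lemma mul_sq_add_sq_le_norm_add_ofReal_sq {τ : ℂ} {κ s : ℝ} (hκ : 0 ≤ κ)
    (hτ : τ.re ≤ κ * ‖τ‖) (hs : s ≤ 0) :
    (1 - κ) * (‖τ‖ ^ 2 + s ^ 2) ≤ ‖τ + s‖ ^ 2 := by
  have hexpand : ‖τ + s‖ ^ 2 = ‖τ‖ ^ 2 + 2 * s * τ.re + s ^ 2 := by
    simp only [Complex.sq_norm, normSq_apply, add_re, add_im, ofReal_re, ofReal_im, add_zero]
    ring
  nlinarith [mul_le_mul_of_nonpos_left hτ hs, mul_nonneg hκ (sq_nonneg (‖τ‖ + s))]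

lemma mul_le_rpow_of_sq_le {a t p : ℝ} (ha : 0 ≤ a) (ht : a ^ 2 ≤ t) (hp : 1 ≤ p) :
    a ^ (p - 1) * t ≤ t ^ ((p + 1) / 2) := by
  have ht0 : 0 ≤ t := (sq_nonneg a).trans ht
  have hsplit : t ^ ((p + 1) / 2) = t ^ ((p - 1) / 2) * t := by
    rw [show (p + 1) / 2 = (p - 1) / 2 + 1 by ring, Real.rpow_add' ht0 (by linarith),
      Real.rpow_one]
  have ha_pow : a ^ (p - 1) = (a ^ 2) ^ ((p - 1) / 2) := by
    rw [← Real.rpow_natCast, ← Real.rpow_mul ha]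
    congr 1
    push_cast
    ring
  rw [hsplit, ha_pow]
  gcongr

lemma one_div_rpow_le_of_mul_le_sq {x c a t p : ℝ} (hx : 0 ≤ x) (hc : 0 < c) (ha : 0 < a)
    (hat : a ^ 2 ≤ t) (hxt : c * t ≤ x ^ 2) (hp : 1 ≤ p) :
    1 / x ^ (p + 1) ≤ (c ^ ((p + 1) / 2) * a ^ (p - 1))⁻¹ * t⁻¹ := by
  have ht : 0 < t := (pow_pos ha 2).trans_le hat
  have hlower : c ^ ((p + 1) / 2) * a ^ (p - 1) * t ≤ x ^ (p + 1) :=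
    calc c ^ ((p + 1) / 2) * a ^ (p - 1) * t
        = c ^ ((p + 1) / 2) * (a ^ (p - 1) * t) := by ring
      _ ≤ c ^ ((p + 1) / 2) * t ^ ((p + 1) / 2) := by
        gcongr; exact mul_le_rpow_of_sq_le ha.le hat hp
      _ = (c * t) ^ ((p + 1) / 2) := (Real.mul_rpow hc.le ht.le).symm
      _ ≤ (x ^ 2) ^ ((p + 1) / 2) := by gcongr
      _ = x ^ (p + 1) := by
        rw [← Real.rpow_natCast, ← Real.rpow_mul hx]
        congr 1
        push_cast
        ring
  rw [← mul_inv, ← one_div]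
  exact one_div_le_one_div_of_le (by positivity) hlower

lemma inv_sq_add_sq_eq {a : ℝ} (ha : a ≠ 0) (s : ℝ) :
    (a ^ 2 + s ^ 2)⁻¹ = (a ^ 2)⁻¹ * (1 + (s / a) ^ 2)⁻¹ := by
  field_simp

lemma integrable_inv_sq_add_sq {a : ℝ} (ha : a ≠ 0) :
    Integrable fun s : ℝ => (a ^ 2 + s ^ 2)⁻¹ := by
  simp_rw [inv_sq_add_sq_eq ha]
  exact (integrable_inv_one_add_sq.comp_div ha).const_mul _

lemma integral_univ_inv_sq_add_sq {a : ℝ} (ha : a ≠ 0) :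
    ∫ s : ℝ, (a ^ 2 + s ^ 2)⁻¹ = Real.pi / |a| := by
  simp_rw [inv_sq_add_sq_eq ha]
  rw [integral_const_mul, Measure.integral_comp_div (fun u : ℝ => (1 + u ^ 2)⁻¹),
    integral_univ_inv_one_add_sq, smul_eq_mul, ← sq_abs]
  have : |a| ≠ 0 := abs_ne_zero.2 ha
  field_simp

theorem integrableOn_Iic_and_setIntegral_le_of_re_le_mul_norm {τ : ℂ} {κ p : ℝ}
    (hτ0 : τ ≠ 0) (hκ0 : 0 ≤ κ) (hκ1 : κ < 1) (hτ : τ.re ≤ κ * ‖τ‖) (hp : 1 ≤ p) :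
    IntegrableOn (fun s : ℝ => 1 / ‖τ + (s:ℂ)‖ ^ (p + 1)) (Iic 0) ∧
      ∫ s in Iic (0:ℝ), 1 / ‖τ + (s:ℂ)‖ ^ (p + 1)
        ≤ Real.pi / (1 - κ) ^ ((p + 1) / 2) / ‖τ‖ ^ p := by
  have ha : 0 < ‖τ‖ := norm_pos_iff.2 hτ0
  set C := ((1 - κ) ^ ((p + 1) / 2) * ‖τ‖ ^ (p - 1))⁻¹ with hC
  have hbound : ∀ s ∈ Iic (0:ℝ), 1 / ‖τ + (s:ℂ)‖ ^ (p + 1) ≤ C * (‖τ‖ ^ 2 + s ^ 2)⁻¹ :=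
    fun s hs => one_div_rpow_le_of_mul_le_sq (norm_nonneg _) (by linarith) ha
      (by nlinarith) (mul_sq_add_sq_le_norm_add_ofReal_sq hκ0 hτ hs) hp
  have hg : Integrable fun s : ℝ => C * (‖τ‖ ^ 2 + s ^ 2)⁻¹ :=
    (integrable_inv_sq_add_sq ha.ne').const_mul C
  have hf : IntegrableOn (fun s : ℝ => 1 / ‖τ + (s:ℂ)‖ ^ (p + 1)) (Iic 0) := by
    refine hg.integrableOn.mono' (Measurable.aestronglyMeasurable (by fun_prop)) ?_
    filter_upwards [ae_restrict_mem measurableSet_Iic] with s hs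
    rw [Real.norm_of_nonneg (by positivity)]
    exact hbound s hs
  refine ⟨hf, ?_⟩
  calc ∫ s in Iic (0:ℝ), 1 / ‖τ + (s:ℂ)‖ ^ (p + 1)
      ≤ ∫ s in Iic (0:ℝ), C * (‖τ‖ ^ 2 + s ^ 2)⁻¹ :=
        setIntegral_mono_on hf hg.integrableOn measurableSet_Iic hbound
    _ ≤ ∫ s, C * (‖τ‖ ^ 2 + s ^ 2)⁻¹ :=
        setIntegral_le_integral hg (.of_forall fun s => by positivity)
    _ = C * (Real.pi / ‖τ‖) := by
        rw [integral_const_mul, integral_univ_inv_sq_add_sq ha.ne', abs_norm]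
    _ = Real.pi / (1 - κ) ^ ((p + 1) / 2) / ‖τ‖ ^ p := by
        rw [hC, Real.rpow_sub_one ha.ne']
        field_simp

theorem statement15 (θ : ℝ) (hθ : 0 < θ) (hθ4 : θ < Real.pi / 4)
    (p : ℝ) (hp : 1 ≤ p) :
    ∃ K > (0:ℝ), ∀ r : ℝ, 0 < r → ∀ τ ∈ Dminus θ r,
      IntegrableOn (fun s : ℝ => 1 / ‖τ + (s:ℂ)‖ ^ (p+1)) (Set.Iic 0) ∧
      (∫ s in Set.Iic (0:ℝ), 1 / ‖τ + (s:ℂ)‖ ^ (p+1))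
        ≤ K / ‖τ‖ ^ p := by
  have hθ2 : θ ≤ Real.pi / 2 := by linarith
  have hcos_nonneg : 0 ≤ Real.cos θ := Real.cos_nonneg_of_mem_Icc ⟨by linarith, hθ2⟩
  have hcos_lt_one : Real.cos θ < 1 := by
    simpa using Real.cos_lt_cos_of_nonneg_of_le_pi le_rfl (by linarith) hθ
  refine ⟨Real.pi / (1 - Real.cos θ) ^ ((p + 1) / 2), ?_, fun r hr τ hτ => ?_⟩
  · have : 0 < 1 - Real.cos θ := by linarith
    positivity
  exact integrableOn_Iic_and_setIntegral_le_of_re_le_mul_norm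
    (ne_zero_of_mem_Dminus hθ.le hr.le hτ) hcos_nonneg hcos_lt_one
    (re_le_cos_mul_norm_of_mem_Dminus hθ.le hθ2 hr.le hτ) hp
end
end

section
/- Let r > 1 and let f : 𝕋_h × D_r^− → ℂ be analytic, continuous on the closure of its domain, and suppose |f(φ,τ)| ≤ K_f/|τ|^p for some K_f > 0 and p ≥ 2. Then u⁻(φ,τ) = ∫_{−∞}^0 f(φ+s, τ+s) ds defines an analytic function on 𝕋_h × D_r^−, continuous on the closure of its domain, and |u⁻(φ,τ)| ≤ K_{p−1} K_f/|τ|^{p−1}, where K_{p−1} is a constant depending only on p and θ (independent of r). -/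
/-!
For `s ≤ 0` the point `τ + s` stays in `D_r^−`, and `|τ + s| ≥ (sin θ / 4) (|τ| - s)` on the
closure of the domain. Hence the integrand is dominated by `K_f ((sin θ / 4)(|τ| - s))^{-p}`,
which is integrable on `(-∞, 0]` with integral `K_f (4 / sin θ)^p / (p - 1) · |τ|^{1-p}`; this gives
the bound, and continuity on the closure follows by dominated convergence.

For analyticity, around a point of the open domain pick a polydisc whose translates along the
backward diagonal all stay in the domain. On each translate `f` equals its double Cauchy series,
with coefficients bounded by the sup of `f` on the translate divided by `R^(k+j)`; that sup decays
integrably along the ray, so the series can be integrated term by term and `u⁻` is given by a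
convergent double power series.
-/

noncomputable section
open Complex Set MeasureTheory

open Metric Filter Topology
open scoped Real Interval

section Geometry

variable {h θ r : ℝ}

lemma isOpen_Strip (h : ℝ) : IsOpen (Strip h) :=
  isOpen_lt (continuous_abs.comp continuous_im) continuous_const

lemma add_ofReal_mem_Strip {φ : ℂ} (hφ : φ ∈ Strip h) (s : ℝ) : φ + s ∈ Strip h := by
  simpa [Strip] using hφ

lemma mem_Dminus_iff (hθ : 0 < θ) (hθπ : θ < π) {τ : ℂ} :
    τ ∈ Dminus θ r ↔ (τ + r).re < Real.cos θ * ‖τ + r‖ := by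
  rcases eq_or_ne (τ + r) 0 with h0 | h0
  · simp [Dminus, h0, hθ.not_gt]
  rw [Dminus, mem_ofPred_eq, ← Real.strictAntiOn_cos.lt_iff_gt ⟨abs_nonneg _, abs_arg_le_pi _⟩
    ⟨hθ.le, hθπ.le⟩, Real.cos_abs, cos_arg h0, div_lt_iff₀ (norm_pos_iff.2 h0)]

lemma isOpen_Dminus (hθ : 0 < θ) (hθπ : θ < π) (r : ℝ) : IsOpen (Dminus θ r) := by
  rw [show Dminus θ r = {τ : ℂ | (τ + r).re < Real.cos θ * ‖τ + r‖} from
    Set.ext fun τ => mem_Dminus_iff hθ hθπ]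
  exact isOpen_lt (by fun_prop) (by fun_prop)

lemma add_ofReal_mem_Dminus (hθ : 0 < θ) (hθπ : θ < π / 2) {τ : ℂ} (hτ : τ ∈ Dminus θ r)
    {s : ℝ} (hs : s ≤ 0) : τ + s ∈ Dminus θ r := by
  have hθπ' : θ < π := by linarith [Real.pi_pos]
  rw [mem_Dminus_iff hθ hθπ'] at hτ ⊢
  have hcos : 0 ≤ Real.cos θ := Real.cos_nonneg_of_mem_Icc ⟨by linarith, hθπ.le⟩
  have hnorm : ‖τ + r‖ ≤ ‖τ + s + r‖ - s :=
    calc ‖τ + r‖ = ‖(τ + s + r) + ((-s : ℝ) : ℂ)‖ := by push_cast; ring_nf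
      _ ≤ ‖τ + s + r‖ + ‖((-s : ℝ) : ℂ)‖ := norm_add_le _ _
      _ = ‖τ + s + r‖ - s := by rw [norm_real, Real.norm_of_nonneg (by linarith)]; ring
  have hre : (τ + s + r).re = (τ + r).re + s := by simp; ring
  rw [hre]
  nlinarith [Real.cos_le_one θ]

lemma mul_sin_le_norm_of_mem_Dminus (hθ : 0 < θ) (hθπ : θ < π) (hr : 0 ≤ r) {τ : ℂ}
    (hτ : τ ∈ Dminus θ r) : r * Real.sin θ ≤ ‖τ‖ := by
  rw [mem_Dminus_iff hθ hθπ] at hτ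
  have hsq : ‖τ‖ ^ 2 = ‖τ + r‖ ^ 2 - 2 * r * (τ + r).re + r ^ 2 := by
    simp only [Complex.sq_norm, normSq_apply, add_re, add_im, ofReal_re, ofReal_im]
    ring
  have hsin := Real.sin_pos_of_pos_of_lt_pi hθ hθπ
  nlinarith [sq_nonneg (‖τ + r‖ - r * Real.cos θ), Real.sin_sq_add_cos_sq θ, norm_nonneg τ,
    mul_le_mul_of_nonneg_left hτ.le (by linarith : (0:ℝ) ≤ 2 * r), mul_nonneg hr hsin.le]

lemma sin_div_four_mul_le_norm_add_ofReal (hθ : 0 < θ) (hθπ : θ < π) (hr : 0 ≤ r) {τ : ℂ}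
    (hτ : τ ∈ Dminus θ r) {s : ℝ} (hs : s ≤ 0) : Real.sin θ / 4 * (‖τ‖ - s) ≤ ‖τ + s‖ := by
  have hsin := Real.sin_pos_of_pos_of_lt_pi hθ hθπ
  -- `τ + s ∈ D_{r - s}`, a domain at distance `(r - s) sin θ` from the origin
  have hfar : (r - s) * Real.sin θ ≤ ‖τ + s‖ := by
    refine mul_sin_le_norm_of_mem_Dminus hθ hθπ (by linarith) ?_
    simpa [Dminus, add_assoc] using hτ
  have hnear : ‖τ‖ + s ≤ ‖τ + s‖ := by
    simpa [abs_of_nonpos hs] using norm_sub_norm_le τ (-(s : ℂ))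
  rcases le_or_gt (-s) (‖τ‖ / 2) with hcase | hcase
  · nlinarith [Real.sin_le_one θ, norm_nonneg τ]
  · nlinarith [mul_nonneg hr hsin.le, Real.sin_le_one θ]

lemma mul_sin_le_norm_of_mem_closure_Dminus (hθ : 0 < θ) (hθπ : θ < π) (hr : 0 ≤ r) {τ : ℂ}
    (hτ : τ ∈ closure (Dminus θ r)) : r * Real.sin θ ≤ ‖τ‖ :=
  le_on_closure (fun _ hτ => mul_sin_le_norm_of_mem_Dminus hθ hθπ hr hτ) continuousOn_const
    continuous_norm.continuousOn hτ

lemma sin_div_four_mul_le_norm_add_ofReal_of_mem_closure (hθ : 0 < θ) (hθπ : θ < π)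
    (hr : 0 ≤ r) {τ : ℂ} (hτ : τ ∈ closure (Dminus θ r)) {s : ℝ} (hs : s ≤ 0) :
    Real.sin θ / 4 * (‖τ‖ - s) ≤ ‖τ + s‖ :=
  le_on_closure (fun _ hτ => sin_div_four_mul_le_norm_add_ofReal hθ hθπ hr hτ hs)
    (by fun_prop) (by fun_prop) hτ

lemma shift_mem_Strip_prod_Dminus (hθ : 0 < θ) (hθπ : θ < π / 2) {q : ℂ × ℂ}
    (hq : q ∈ Strip h ×ˢ Dminus θ r) {s : ℝ} (hs : s ≤ 0) :
    (q.1 + s, q.2 + s) ∈ Strip h ×ˢ Dminus θ r :=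
  ⟨add_ofReal_mem_Strip hq.1 s, add_ofReal_mem_Dminus hθ hθπ hq.2 hs⟩

lemma shift_mem_closure_Strip_prod_Dminus (hθ : 0 < θ) (hθπ : θ < π / 2) {q : ℂ × ℂ}
    (hq : q ∈ closure (Strip h ×ˢ Dminus θ r)) {s : ℝ} (hs : s ≤ 0) :
    (q.1 + s, q.2 + s) ∈ closure (Strip h ×ˢ Dminus θ r) :=
  map_mem_closure (f := fun q : ℂ × ℂ => (q.1 + s, q.2 + s)) (by fun_prop) hq
    fun _ hq => shift_mem_Strip_prod_Dminus hθ hθπ hq hs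

end Geometry

section Decay

lemma indicator_Iic_comp_sub_left {E : Type*} [Zero E] (g : ℝ → E) (B : ℝ) :
    (Iic 0).indicator (fun s => g (B - s)) = fun s => (Ici B).indicator g (B - s) := by
  ext s
  simp [indicator]

lemma integrableOn_Iic_comp_sub_left {E : Type*} [NormedAddCommGroup E] {g : ℝ → E} {B : ℝ}
    (hg : IntegrableOn g (Ioi B)) : IntegrableOn (fun s => g (B - s)) (Iic 0) := by
  rw [← integrable_indicator_iff measurableSet_Iic, indicator_Iic_comp_sub_left,
    integrable_comp_sub_left ((Ici B).indicator g) B, integrable_indicator_iff measurableSet_Ici]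
  exact (integrableOn_Ici_iff_integrableOn_Ioi).2 hg

lemma integral_Iic_comp_sub_left {E : Type*} [NormedAddCommGroup E] [NormedSpace ℝ E]
    (g : ℝ → E) (B : ℝ) :
    ∫ s in Iic 0, g (B - s) = ∫ t in Ioi B, g t := by
  rw [← integral_indicator measurableSet_Iic, indicator_Iic_comp_sub_left,
    integral_sub_left_eq_self ((Ici B).indicator g) volume B, integral_indicator measurableSet_Ici,
    integral_Ici_eq_integral_Ioi]

variable {c B p : ℝ}

lemma div_mul_rpow_eqOn_Ioi (hc : 0 < c) (K : ℝ) :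
    EqOn (fun t => K / (c * t) ^ p) (fun t => K / c ^ p * t ^ (-p)) (Ioi 0) := fun t ht => by
  dsimp only
  rw [Real.mul_rpow hc.le (le_of_lt ht), Real.rpow_neg (le_of_lt ht), div_mul_eq_div_div,
    div_eq_mul_inv (K / c ^ p)]

lemma integrableOn_Iic_div_mul_sub_rpow (hc : 0 < c) (hB : 0 < B) (hp : 1 < p) (K : ℝ) :
    IntegrableOn (fun s => K / (c * (B - s)) ^ p) (Iic 0) := by
  refine integrableOn_Iic_comp_sub_left (g := fun t => K / (c * t) ^ p) ?_
  exact IntegrableOn.congr_fun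
    ((integrableOn_Ioi_rpow_of_lt (a := -p) (by linarith) hB).const_mul (K / c ^ p))
    ((div_mul_rpow_eqOn_Ioi hc K).symm.mono (Ioi_subset_Ioi hB.le)) measurableSet_Ioi

lemma integral_Iic_div_mul_sub_rpow (hc : 0 < c) (hB : 0 < B) (hp : 1 < p) (K : ℝ) :
    ∫ s in Iic 0, K / (c * (B - s)) ^ p = K / (c ^ p * (p - 1) * B ^ (p - 1)) := by
  rw [integral_Iic_comp_sub_left (fun t => K / (c * t) ^ p),
    setIntegral_congr_fun measurableSet_Ioi ((div_mul_rpow_eqOn_Ioi hc K).mono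
      (Ioi_subset_Ioi hB.le)), integral_const_mul, integral_Ioi_rpow_of_lt (by linarith) hB,
    show -p + 1 = -(p - 1) by ring, Real.rpow_neg hB.le]
  have : p - 1 ≠ 0 := by linarith
  field_simp

end Decay

def cauchyCoeff (g : ℂ → ℂ) (c : ℂ) (R : ℝ) (n : ℕ) : ℂ :=
  (2 * π : ℂ)⁻¹ * ∫ θ in (0:ℝ)..2 * π, (circleMap 0 R θ)⁻¹ ^ n * g (c + circleMap 0 R θ)

lemma add_circleMap_zero (c : ℂ) (R θ : ℝ) : c + circleMap 0 R θ = circleMap c R θ := by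
  simp [circleMap]

lemma cauchyPowerSeries_apply_const {g : ℂ → ℂ} {c : ℂ} {R : ℝ} (hR : R ≠ 0) (n : ℕ) (y : ℂ) :
    (cauchyPowerSeries g c R n fun _ => y) = cauchyCoeff g c R n * y ^ n := by
  have hne : ∀ θ : ℝ, circleMap 0 R θ ≠ 0 := fun θ => circleMap_ne_center hR
  simp only [cauchyPowerSeries, ContinuousMultilinearMap.mkPiRing_apply, Fin.prod_const,
    circleIntegral, deriv_circleMap, circleMap_sub_center, smul_eq_mul, cauchyCoeff,
    add_circleMap_zero]
  have e : ∀ θ : ℝ, circleMap 0 R θ * I * ((circleMap 0 R θ)⁻¹ ^ n * ((circleMap 0 R θ)⁻¹ *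
      g (circleMap c R θ))) = I * ((circleMap 0 R θ)⁻¹ ^ n * g (circleMap c R θ)) := by
    intro θ
    field_simp [hne θ]
  simp only [e, intervalIntegral.integral_const_mul]
  field_simp [Real.pi_pos.ne', I_ne_zero]

lemma hasSum_cauchyCoeff {g : ℂ → ℂ} {c y : ℂ} {R : ℝ} (hR : 0 < R)
    (hg : DifferentiableOn ℂ g (closedBall c R)) (hy : ‖y‖ < R) :
    HasSum (fun n => cauchyCoeff g c R n * y ^ n) (g (c + y)) := by
  lift R to NNReal using hR.le
  have hs := (hg.hasFPowerSeriesOnBall (mod_cast hR)).hasSum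
    (y := y) (by simpa [mem_eball_zero_iff, ← ofReal_norm] using hy)
  simpa only [cauchyPowerSeries_apply_const (NNReal.coe_ne_zero.2 (mod_cast hR.ne'))] using hs

lemma norm_cauchyCoeff_le {g : ℂ → ℂ} {c : ℂ} {R M : ℝ} (hR : 0 < R)
    (hg : ∀ z ∈ sphere c R, ‖g z‖ ≤ M) (n : ℕ) : ‖cauchyCoeff g c R n‖ ≤ M / R ^ n := by
  have hbound : ∀ θ ∈ Ι (0:ℝ) (2 * π),
      ‖(circleMap 0 R θ)⁻¹ ^ n * g (c + circleMap 0 R θ)‖ ≤ M / R ^ n := by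
    intro θ _
    rw [norm_mul, norm_pow, norm_inv, norm_circleMap_zero, abs_of_pos hR, inv_pow,
      ← div_eq_inv_mul]
    gcongr
    rw [add_circleMap_zero]
    exact hg _ (circleMap_mem_sphere c hR.le θ)
  calc ‖cauchyCoeff g c R n‖
      = (2 * π)⁻¹ * ‖∫ θ in (0:ℝ)..2 * π, (circleMap 0 R θ)⁻¹ ^ n * g (c + circleMap 0 R θ)‖ := by
        simp [cauchyCoeff, abs_of_pos Real.pi_pos]
    _ ≤ (2 * π)⁻¹ * (M / R ^ n * |2 * π - 0|) := by
        gcongr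
        exact intervalIntegral.norm_integral_le_of_norm_le_const hbound
    _ = M / R ^ n := by
        rw [sub_zero, abs_of_pos Real.two_pi_pos]
        field_simp

lemma differentiableAt_cauchyCoeff {H : ℂ → ℂ → ℂ} {a₀ c : ℂ} {R ε : ℝ} (hR : 0 < R) (hε : 0 < ε)
    (hH : AnalyticOnNhd ℂ (fun q : ℂ × ℂ => H q.1 q.2) (closedBall a₀ ε ×ˢ sphere c R))
    (n : ℕ) : DifferentiableAt ℂ (fun a => cauchyCoeff (H a) c R n) a₀ := by
  set K := closedBall a₀ ε ×ˢ sphere c R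
  set H₁ : ℂ → ℂ → ℂ := fun a z => fderiv ℂ (fun q : ℂ × ℂ => H q.1 q.2) (a, z) (1, 0)
  have hH₁ : ContinuousOn (fun q : ℂ × ℂ => H₁ q.1 q.2) K :=
    (ContinuousLinearMap.apply ℂ ℂ ((1:ℂ), (0:ℂ))).continuous.comp_continuousOn
      hH.fderiv.continuousOn
  obtain ⟨C, hC⟩ :=
    ((isCompact_closedBall a₀ ε).prod (isCompact_sphere c R)).exists_bound_of_continuousOn hH₁
  have hmem : ∀ a ∈ closedBall a₀ ε, ∀ θ : ℝ, (a, c + circleMap 0 R θ) ∈ K := fun a ha θ =>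
    ⟨ha, by rw [add_circleMap_zero]; exact circleMap_mem_sphere c hR.le θ⟩
  have hderiv : ∀ a ∈ closedBall a₀ ε, ∀ θ : ℝ,
      HasDerivAt (fun a => H a (c + circleMap 0 R θ)) (H₁ a (c + circleMap 0 R θ)) a := by
    intro a ha θ
    have hline : HasDerivAt (fun z : ℂ => ((z, c + circleMap 0 R θ) : ℂ × ℂ)) ((1:ℂ), (0:ℂ)) a :=
      (hasDerivAt_id a).prodMk (hasDerivAt_const a _)
    exact (hH _ (hmem a ha θ)).differentiableAt.hasFDerivAt.comp_hasDerivAt a hline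
  have hcont : ∀ (G : ℂ → ℂ → ℂ), ∀ a ∈ closedBall a₀ ε,
      ContinuousOn (fun q : ℂ × ℂ => G q.1 q.2) K →
      Continuous fun θ : ℝ => (circleMap 0 R θ)⁻¹ ^ n * G a (c + circleMap 0 R θ) := by
    intro G a ha hG
    refine (((continuous_circleMap 0 R).inv₀ fun θ => circleMap_ne_center hR.ne').pow n).mul ?_
    exact hG.comp_continuous (by fun_prop) (hmem a ha)
  have key := intervalIntegral.hasDerivAt_integral_of_dominated_loc_of_deriv_le
    (μ := volume) (a := 0) (b := 2 * π) (x₀ := a₀)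
    (F := fun a θ => (circleMap 0 R θ)⁻¹ ^ n * H a (c + circleMap 0 R θ))
    (F' := fun a θ => (circleMap 0 R θ)⁻¹ ^ n * H₁ a (c + circleMap 0 R θ))
    (bound := fun _ => R⁻¹ ^ n * C) (ball_mem_nhds a₀ hε)
    (Filter.eventually_of_mem (ball_mem_nhds a₀ hε) fun a ha =>
      (hcont H a (ball_subset_closedBall ha) hH.continuousOn).aestronglyMeasurable)
    ((hcont H a₀ (mem_closedBall_self hε.le) hH.continuousOn).intervalIntegrable _ _)
    (hcont H₁ a₀ (mem_closedBall_self hε.le) hH₁).aestronglyMeasurable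
    (ae_of_all _ fun θ _ a ha => by
      rw [norm_mul, norm_pow, norm_inv, norm_circleMap_zero, abs_of_pos hR]
      gcongr
      exact hC _ (hmem a (ball_subset_closedBall ha) θ))
    intervalIntegrable_const
    (ae_of_all _ fun θ _ a ha =>
      (hderiv a (ball_subset_closedBall ha) θ).const_mul _)
  exact (key.2.differentiableAt).const_mul _

def cauchyCoeff₂ (F : ℂ → ℂ → ℂ) (a₀ b₀ : ℂ) (R : ℝ) (k j : ℕ) : ℂ :=
  cauchyCoeff (fun a => cauchyCoeff (F a) b₀ R j) a₀ R k

lemma norm_cauchyCoeff₂_le {F : ℂ → ℂ → ℂ} {a₀ b₀ : ℂ} {R M : ℝ} (hR : 0 < R)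
    (hM : ∀ a ∈ sphere a₀ R, ∀ b ∈ sphere b₀ R, ‖F a b‖ ≤ M) (k j : ℕ) :
    ‖cauchyCoeff₂ F a₀ b₀ R k j‖ ≤ M / R ^ (k + j) := by
  refine (norm_cauchyCoeff_le hR (fun a ha => norm_cauchyCoeff_le hR (hM a ha) j) k).trans_eq ?_
  rw [div_div, ← pow_add, add_comm j k]

lemma hasSum_cauchyCoeff₂ {F : ℂ → ℂ → ℂ} {a₀ b₀ : ℂ} {R : ℝ} (hR : 0 < R)
    (hF : AnalyticOnNhd ℂ (fun q : ℂ × ℂ => F q.1 q.2) (closedBall (a₀, b₀) (2 * R)))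
    {v : ℂ × ℂ} (hv : ‖v‖ < R) :
    HasSum (fun kj : ℕ × ℕ => cauchyCoeff₂ F a₀ b₀ R kj.1 kj.2 * v.1 ^ kj.1 * v.2 ^ kj.2)
      (F (a₀ + v.1) (b₀ + v.2)) := by
  obtain ⟨x, y⟩ := v
  have hx : ‖x‖ < R := (norm_fst_le (x, y)).trans_lt hv
  have hy : ‖y‖ < R := (norm_snd_le (x, y)).trans_lt hv
  rw [← closedBall_prod_same] at hF
  have hsub : ∀ {z : ℂ} {c : ℂ}, z ∈ closedBall c R → closedBall z R ⊆ closedBall c (2 * R) :=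
    fun hz => closedBall_subset_closedBall' (by rw [mem_closedBall] at hz; linarith)
  have hball : ∀ c : ℂ, closedBall c R ⊆ closedBall c (2 * R) :=
    fun c => hsub (mem_closedBall_self hR.le)
  have hsphere : ∀ c : ℂ, sphere c R ⊆ closedBall c (2 * R) :=
    fun c => sphere_subset_closedBall.trans (hball c)
  obtain ⟨M, hM⟩ := ((isCompact_sphere a₀ R).prod
    (isCompact_sphere b₀ R)).exists_bound_of_continuousOn
      (hF.continuousOn.mono (prod_mono (hsphere a₀) (hsphere b₀)))
  have hinner : ∀ j, HasSum (fun k => cauchyCoeff₂ F a₀ b₀ R k j * x ^ k)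
      (cauchyCoeff (F (a₀ + x)) b₀ R j) := fun j =>
    hasSum_cauchyCoeff hR (fun a ha => (differentiableAt_cauchyCoeff hR hR
      (hF.mono (prod_mono (hsub ha) (hsphere b₀))) j).differentiableWithinAt) hx
  have houter :
      HasSum (fun j => cauchyCoeff (F (a₀ + x)) b₀ R j * y ^ j) (F (a₀ + x) (b₀ + y)) := by
    refine hasSum_cauchyCoeff hR (fun b hb => ?_) hy
    have hxmem : a₀ + x ∈ closedBall a₀ R := by simpa [mem_closedBall, dist_eq_norm] using hx.le
    have hline : DifferentiableAt ℂ (fun z : ℂ => ((a₀ + x, z) : ℂ × ℂ)) b :=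
      (differentiableAt_const _).prodMk differentiableAt_id
    exact ((hF _ ⟨hball a₀ hxmem, hball b₀ hb⟩).differentiableAt.comp b
      hline).differentiableWithinAt
  have hsummable : Summable (fun kj : ℕ × ℕ =>
      cauchyCoeff₂ F a₀ b₀ R kj.1 kj.2 * x ^ kj.1 * y ^ kj.2) := by
    have hx' : ‖x‖ / R < 1 := (div_lt_one hR).2 hx
    have hy' : ‖y‖ / R < 1 := (div_lt_one hR).2 hy
    refine Summable.of_norm_bounded
      (g := fun kj : ℕ × ℕ => M * (‖x‖ / R) ^ kj.1 * (‖y‖ / R) ^ kj.2)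
      (Summable.mul_of_nonneg ((summable_geometric_of_lt_one (by positivity) hx').mul_left M)
        (summable_geometric_of_lt_one (by positivity) hy') (fun k => ?_) (fun j => by positivity))
      (fun ⟨k, j⟩ => ?_)
    · exact mul_nonneg ((norm_nonneg _).trans (hM (a₀ + R, b₀ + R) ⟨by simp [abs_of_pos hR],
        by simp [abs_of_pos hR]⟩)) (by positivity)
    · have hc := norm_cauchyCoeff₂_le hR (fun a ha b hb => hM (a, b) ⟨ha, hb⟩) k j
      calc ‖cauchyCoeff₂ F a₀ b₀ R k j * x ^ k * y ^ j‖
          = ‖cauchyCoeff₂ F a₀ b₀ R k j‖ * ‖x‖ ^ k * ‖y‖ ^ j := by simp only [norm_mul, norm_pow]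
        _ ≤ M / R ^ (k + j) * ‖x‖ ^ k * ‖y‖ ^ j := by gcongr
        _ = M * (‖x‖ / R) ^ k * (‖y‖ / R) ^ j := by rw [pow_add, div_pow, div_pow]; ring
  have hswap := hsummable.prod_symm.hasSum
  have hT := (hswap.prod_fiberwise fun j => (hinner j).mul_right (y ^ j)).unique houter
  exact (Equiv.prodComm ℕ ℕ).hasSum_iff.1 (hT ▸ hswap)

lemma continuousOn_cauchyCoeff₂ {F : ℂ → ℂ → ℂ} {K T : Set (ℂ × ℂ)} {R : ℝ} (hR : 0 < R)
    (hF : ContinuousOn (fun q : ℂ × ℂ => F q.1 q.2) K)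
    (hT : ∀ c ∈ T, ∀ θ₁ θ₂ : ℝ, (c.1 + circleMap 0 R θ₁, c.2 + circleMap 0 R θ₂) ∈ K) (k j : ℕ) :
    ContinuousOn (fun c : ℂ × ℂ => cauchyCoeff₂ F c.1 c.2 R k j) T := by
  have hw : Continuous fun θ : ℝ => (circleMap 0 R θ)⁻¹ :=
    (continuous_circleMap 0 R).inv₀ fun θ => circleMap_ne_center hR.ne'
  rw [continuousOn_iff_continuous_domRestrict]
  simp only [domRestrict_def, cauchyCoeff₂, cauchyCoeff]
  refine continuous_const.mul
    (intervalIntegral.continuous_parametric_intervalIntegral_of_continuous' ?_ _ _)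
  refine ((hw.comp continuous_snd).pow k).mul (continuous_const.mul
    (intervalIntegral.continuous_parametric_intervalIntegral_of_continuous' ?_ _ _))
  refine ((hw.comp continuous_snd).pow j).mul (hF.comp_continuous
    (f := fun w : (T × ℝ) × ℝ => ((w.1.1 : ℂ × ℂ).1 + circleMap 0 R w.1.2,
      (w.1.1 : ℂ × ℂ).2 + circleMap 0 R w.2)) ?_ ?_)
  · fun_prop
  · exact fun w => hT _ w.1.1.2 _ _

def bivariateMonomial (n k : ℕ) : ContinuousMultilinearMap ℂ (fun _ : Fin n => ℂ × ℂ) ℂ :=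
  (ContinuousMultilinearMap.mkPiAlgebra ℂ (Fin n) ℂ).compContinuousLinearMap
    fun i => if (i : ℕ) < k then ContinuousLinearMap.fst ℂ ℂ ℂ else ContinuousLinearMap.snd ℂ ℂ ℂ

lemma bivariateMonomial_apply {n k : ℕ} (hk : k ≤ n) (v : ℂ × ℂ) :
    (bivariateMonomial n k fun _ => v) = v.1 ^ k * v.2 ^ (n - k) := by
  have e : ∀ i : Fin n,
      (if (i : ℕ) < k then ContinuousLinearMap.fst ℂ ℂ ℂ else ContinuousLinearMap.snd ℂ ℂ ℂ) v
        = if (i : ℕ) < k then v.1 else v.2 := fun i => by split_ifs <;> rfl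
  rw [bivariateMonomial, ContinuousMultilinearMap.compContinuousLinearMap_apply,
    ContinuousMultilinearMap.mkPiAlgebra_apply, Finset.prod_congr rfl fun i _ => e i,
    Fin.prod_univ_eq_prod_range (fun i => if i < k then v.1 else v.2) n,
    ← Nat.add_sub_cancel' hk, Finset.prod_range_add, Nat.add_sub_cancel_left,
    Finset.prod_congr rfl fun i hi => if_pos (Finset.mem_range.1 hi),
    Finset.prod_congr rfl fun i _ => if_neg (by omega)]
  simp

lemma norm_bivariateMonomial_le (n k : ℕ) : ‖bivariateMonomial n k‖ ≤ 1 := by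
  refine (ContinuousMultilinearMap.norm_compContinuousLinearMap_le _ _).trans ?_
  rw [ContinuousMultilinearMap.norm_mkPiAlgebra, one_mul]
  refine Finset.prod_le_one (fun i _ => norm_nonneg _) fun i _ => ?_
  split_ifs
  exacts [ContinuousLinearMap.norm_fst_le .., ContinuousLinearMap.norm_snd_le ..]

def bivariateSeries (a : ℕ → ℕ → ℂ) : FormalMultilinearSeries ℂ (ℂ × ℂ) ℂ :=
  fun n => ∑ k ∈ Finset.range (n + 1), a k (n - k) • bivariateMonomial n k

lemma bivariateSeries_apply (a : ℕ → ℕ → ℂ) (n : ℕ) (v : ℂ × ℂ) :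
    (bivariateSeries a n fun _ => v) =
      ∑ p ∈ Finset.HasAntidiagonal.antidiagonal n, a p.1 p.2 * v.1 ^ p.1 * v.2 ^ p.2 := by
  rw [Finset.Nat.sum_antidiagonal_eq_sum_range_succ_mk, bivariateSeries,
    _root_.sum_apply]
  refine Finset.sum_congr rfl fun k hk => ?_
  rw [_root_.smul_apply,
    bivariateMonomial_apply (Nat.lt_succ_iff.1 (Finset.mem_range.1 hk)), smul_eq_mul, mul_assoc]

lemma norm_bivariateSeries_le {a : ℕ → ℕ → ℂ} {C R : ℝ}
    (ha : ∀ k j, ‖a k j‖ ≤ C / R ^ (k + j)) (n : ℕ) :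
    ‖bivariateSeries a n‖ ≤ (n + 1) * (C / R ^ n) := by
  refine (norm_sum_le _ _).trans ?_
  calc ∑ k ∈ Finset.range (n + 1), ‖a k (n - k) • bivariateMonomial n k‖
      ≤ ∑ _k ∈ Finset.range (n + 1), C / R ^ n := by
        refine Finset.sum_le_sum fun k hk => (norm_smul _ _).trans_le ?_
        have hkn : k + (n - k) = n := by have := Finset.mem_range.1 hk; omega
        have := ha k (n - k)
        rw [hkn] at this
        simpa using mul_le_mul this (norm_bivariateMonomial_le n k) (norm_nonneg _)
          ((norm_nonneg _).trans this)
    _ = (n + 1) * (C / R ^ n) := by simp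

lemma analyticAt_of_hasSum_doubleSeries {F : ℂ × ℂ → ℂ} {z₀ : ℂ × ℂ} {a : ℕ → ℕ → ℂ} {C R : ℝ}
    (hR : 0 < R) (ha : ∀ k j, ‖a k j‖ ≤ C / R ^ (k + j))
    (hF : ∀ v : ℂ × ℂ, ‖v‖ < R →
      HasSum (fun kj : ℕ × ℕ => a kj.1 kj.2 * v.1 ^ kj.1 * v.2 ^ kj.2) (F (z₀ + v))) :
    AnalyticAt ℂ F z₀ := by
  have hC : 0 ≤ C := by simpa using (norm_nonneg _).trans (ha 0 0)
  have hrad : ENNReal.ofReal (R / 2) ≤ (bivariateSeries a).radius := by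
    refine (bivariateSeries a).le_radius_of_bound C (r := (R / 2).toNNReal) fun n => ?_
    rw [Real.coe_toNNReal _ (by positivity)]
    have h2n : (n : ℝ) + 1 ≤ 2 ^ n := by exact_mod_cast Nat.lt_two_pow_self
    calc ‖bivariateSeries a n‖ * (R / 2) ^ n ≤ (n + 1) * (C / R ^ n) * (R / 2) ^ n := by
          gcongr; exact norm_bivariateSeries_le ha n
      _ = (n + 1) / 2 ^ n * C := by rw [div_pow]; field_simp
      _ ≤ 1 * C := by gcongr; exact (div_le_one (by positivity)).2 h2n
      _ = C := one_mul C
  refine ⟨bivariateSeries a, _, hrad, ENNReal.ofReal_pos.2 (by positivity), fun {v} hv => ?_⟩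
  have hvR : ‖v‖ < R := by
    rw [mem_eball_zero_iff, ← ofReal_norm, ENNReal.ofReal_lt_ofReal_iff (by positivity)] at hv
    linarith
  simp only [bivariateSeries_apply]
  refine (Finset.HasAntidiagonal.sigmaAntidiagonalEquivProd.hasSum_iff.2 (hF v hvR)).sigma
    fun n => ?_
  rw [← Finset.sum_coe_sort]
  exact hasSum_fintype _

lemma analyticAt_integral_of_hasSum_doubleSeries {α : Type*} [MeasurableSpace α] {μ : Measure α}
    {G : α → ℂ × ℂ → ℂ} {z₀ : ℂ × ℂ} {a : α → ℕ → ℕ → ℂ} {M : α → ℝ} {R : ℝ} (hR : 0 < R)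
    (hM : Integrable M μ) (ha_meas : ∀ k j, AEStronglyMeasurable (fun x => a x k j) μ)
    (ha : ∀ᵐ x ∂μ, ∀ k j, ‖a x k j‖ ≤ M x / R ^ (k + j))
    (hG : ∀ᵐ x ∂μ, ∀ v : ℂ × ℂ, ‖v‖ < R →
      HasSum (fun kj : ℕ × ℕ => a x kj.1 kj.2 * v.1 ^ kj.1 * v.2 ^ kj.2) (G x (z₀ + v))) :
    AnalyticAt ℂ (fun z => ∫ x, G x z ∂μ) z₀ := by
  have hint : ∀ k j, Integrable (fun x => a x k j) μ := fun k j =>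
    (hM.div_const (R ^ (k + j))).mono' (ha_meas k j) (ha.mono fun x hx => hx k j)
  refine analyticAt_of_hasSum_doubleSeries (a := fun k j => ∫ x, a x k j ∂μ) (C := ∫ x, M x ∂μ) hR
    (fun k j => ?_) (fun v hv => ?_)
  · rw [← integral_div]
    exact norm_integral_le_of_norm_le (hM.div_const _) (ha.mono fun x hx => hx k j)
  have hx : ‖v.1‖ / R < 1 := (div_lt_one hR).2 ((norm_fst_le v).trans_lt hv)
  have hy : ‖v.2‖ / R < 1 := (div_lt_one hR).2 ((norm_snd_le v).trans_lt hv)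
  have hsum := hasSum_integral_of_summable_integral_norm
    (F := fun (kj : ℕ × ℕ) x => a x kj.1 kj.2 * v.1 ^ kj.1 * v.2 ^ kj.2) (μ := μ)
    (fun kj => ((hint kj.1 kj.2).mul_const _).mul_const _) ?_
  · simp only [integral_mul_const] at hsum
    rwa [integral_congr_ae (hG.mono fun x hx => (hx v hv).tsum_eq)] at hsum
  refine Summable.of_nonneg_of_le (fun kj => integral_nonneg fun x => norm_nonneg _)
    (fun kj => ?_) (Summable.mul_of_nonneg
      ((summable_geometric_of_lt_one (by positivity) hx).mul_left (∫ x, M x ∂μ))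
      (summable_geometric_of_lt_one (by positivity) hy) (fun k => ?_) (fun j => by positivity))
  · obtain ⟨k, j⟩ := kj
    calc ∫ x, ‖a x k j * v.1 ^ k * v.2 ^ j‖ ∂μ
        ≤ ∫ x, M x / R ^ (k + j) * (‖v.1‖ ^ k * ‖v.2‖ ^ j) ∂μ := by
          refine integral_mono_ae (((hint k j).mul_const _).mul_const _).norm
            ((hM.div_const _).mul_const _) (ha.mono fun x hx => ?_)
          simp only [norm_mul, norm_pow, ← mul_assoc]
          gcongr
          exact hx k j
      _ = (∫ x, M x ∂μ) * (‖v.1‖ / R) ^ k * (‖v.2‖ / R) ^ j := by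
          rw [integral_mul_const, integral_div, pow_add, div_pow, div_pow]
          ring
  · have hM0 : 0 ≤ ∫ x, M x ∂μ :=
      integral_nonneg_of_ae (ha.mono fun x hx => by simpa using (norm_nonneg _).trans (hx 0 0))
    positivity

section RayIntegral

def rayIntegral (f : ℂ → ℂ → ℂ) (φ τ : ℂ) : ℂ := ∫ s in Iic (0:ℝ), f (φ + s) (τ + s)

variable {f : ℂ → ℂ → ℂ} {c p K : ℝ}

lemma div_mul_sub_rpow_le_of_le (hK : 0 ≤ K) (hp : 0 ≤ p) (hc : 0 < c) {B B' s : ℝ}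
    (hB : 0 < B) (hBB' : B ≤ B') (hs : s ≤ 0) :
    K / (c * (B' - s)) ^ p ≤ K / (c * (B - s)) ^ p := by
  have : 0 < c * (B - s) := mul_pos hc (by linarith)
  gcongr

lemma norm_rayIntegral_le (hc : 0 < c) (hp : 1 < p) {q : ℂ × ℂ} (hq : 0 < ‖q.2‖)
    (hbound : ∀ s : ℝ, s ≤ 0 → ‖f (q.1 + s) (q.2 + s)‖ ≤ K / (c * (‖q.2‖ - s)) ^ p) :
    ‖rayIntegral f q.1 q.2‖ ≤ K / (c ^ p * (p - 1) * ‖q.2‖ ^ (p - 1)) :=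
  (norm_integral_le_of_norm_le (integrableOn_Iic_div_mul_sub_rpow hc hq hp K)
    ((ae_restrict_iff' measurableSet_Iic).2 (ae_of_all _ hbound))).trans_eq
    (integral_Iic_div_mul_sub_rpow hc hq hp K)

variable {T U : Set (ℂ × ℂ)}

lemma continuousOn_rayIntegral (hshift : ∀ q ∈ T, ∀ s : ℝ, s ≤ 0 → (q.1 + s, q.2 + s) ∈ T)
    (hf : ContinuousOn (fun q : ℂ × ℂ => f q.1 q.2) T) (hpos : ∀ q ∈ T, 0 < ‖q.2‖)
    (hbound : ∀ q ∈ T, ∀ s : ℝ, s ≤ 0 → ‖f (q.1 + s) (q.2 + s)‖ ≤ K / (c * (‖q.2‖ - s)) ^ p)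
    (hK : 0 ≤ K) (hc : 0 < c) (hp : 1 < p) :
    ContinuousOn (fun q : ℂ × ℂ => rayIntegral f q.1 q.2) T := by
  intro q₀ hq₀
  have hshift_cont : ∀ s : ℝ, Continuous fun q : ℂ × ℂ => (q.1 + s, q.2 + s) := fun s => by
    fun_prop
  have hnear : ∀ᶠ q in 𝓝[T] q₀, ‖q₀.2‖ / 2 ≤ ‖q.2‖ :=
    nhdsWithin_le_nhds ((continuous_norm.comp continuous_snd).continuousAt.eventually
      (le_mem_nhds (b := ‖q₀.2‖) (by linarith [hpos q₀ hq₀])))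
  refine tendsto_integral_filter_of_dominated_convergence
    (fun s => K / (c * (‖q₀.2‖ / 2 - s)) ^ p) ?_ ?_
    (integrableOn_Iic_div_mul_sub_rpow hc (by linarith [hpos q₀ hq₀]) hp K) ?_
  · filter_upwards [self_mem_nhdsWithin] with q hq
    refine ContinuousOn.aestronglyMeasurable ?_ measurableSet_Iic
    exact hf.comp (Continuous.continuousOn (by fun_prop) :
      ContinuousOn (fun s : ℝ => ((q.1 + s, q.2 + s) : ℂ × ℂ)) _) fun s hs => hshift q hq s hs
  · filter_upwards [self_mem_nhdsWithin, hnear] with q hq hq₀q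
    refine (ae_restrict_iff' measurableSet_Iic).2 (ae_of_all _ fun s hs => ?_)
    exact (hbound q hq s hs).trans (div_mul_sub_rpow_le_of_le hK (by linarith) hc
      (by linarith [hpos q₀ hq₀]) hq₀q hs)
  · refine (ae_restrict_iff' measurableSet_Iic).2 (ae_of_all _ fun s hs => ?_)
    exact (hf _ (hshift q₀ hq₀ s hs)).tendsto.comp (tendsto_nhdsWithin_iff.2
      ⟨(hshift_cont s).continuousWithinAt, eventually_mem_nhdsWithin.mono
        fun q hq => hshift q hq s hs⟩)

lemma exists_polydisc_shift_subset (hU : IsOpen U)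
    (hshift : ∀ q ∈ U, ∀ s : ℝ, s ≤ 0 → (q.1 + s, q.2 + s) ∈ U) (hpos : ∀ q ∈ U, 0 < ‖q.2‖)
    (hbound : ∀ q ∈ U, ∀ s : ℝ, s ≤ 0 → ‖f (q.1 + s) (q.2 + s)‖ ≤ K / (c * (‖q.2‖ - s)) ^ p)
    (hK : 0 ≤ K) (hc : 0 < c) (hp : 0 ≤ p) {q₀ : ℂ × ℂ} (hq₀ : q₀ ∈ U) :
    ∃ R > 0, ∀ s : ℝ, s ≤ 0 → ∀ w ∈ closedBall (q₀.1 + s, q₀.2 + s) (2 * R),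
      w ∈ U ∧ ‖f w.1 w.2‖ ≤ K / (c * (‖q₀.2‖ / 2 - s)) ^ p := by
  obtain ⟨ε, hε, hball⟩ := Metric.isOpen_iff.1 hU q₀ hq₀
  have hB := hpos q₀ hq₀
  refine ⟨min (ε / 4) (‖q₀.2‖ / 4), lt_min (by linarith) (by linarith), fun s hs w hw => ?_⟩
  set e : ℂ × ℂ := ((s : ℂ), (s : ℂ))
  -- the polydisc is the translate by `e` of a polydisc inside `U`
  rw [show (q₀.1 + s, q₀.2 + s) = q₀ + e from rfl, mem_closedBall, ← dist_sub_right _ _ e,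
    add_sub_cancel_right] at hw
  have hw' : w - e ∈ ball q₀ ε :=
    mem_ball.2 (hw.trans_lt (by linarith [min_le_left (ε / 4) (‖q₀.2‖ / 4)]))
  have hmem := hshift _ (hball hw') s hs
  have hw_bound := hbound _ (hball hw') s hs
  simp only [e, Prod.fst_sub, Prod.snd_sub, sub_add_cancel] at hmem hw_bound
  refine ⟨hmem, hw_bound.trans (div_mul_sub_rpow_le_of_le hK hp hc (by linarith) ?_ hs)⟩
  have h2 := (norm_snd_le (w - e - q₀)).trans (dist_eq_norm (w - e) q₀ ▸ hw)
  have h3 := norm_sub_norm_le q₀.2 (w - e).2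
  rw [norm_sub_rev] at h3
  simp only [Prod.snd_sub] at h2 h3 ⊢
  linarith [min_le_right (ε / 4) (‖q₀.2‖ / 4)]

lemma analyticOnNhd_rayIntegral (hU : IsOpen U)
    (hshift : ∀ q ∈ U, ∀ s : ℝ, s ≤ 0 → (q.1 + s, q.2 + s) ∈ U)
    (hf : AnalyticOnNhd ℂ (fun q : ℂ × ℂ => f q.1 q.2) U) (hpos : ∀ q ∈ U, 0 < ‖q.2‖)
    (hbound : ∀ q ∈ U, ∀ s : ℝ, s ≤ 0 → ‖f (q.1 + s) (q.2 + s)‖ ≤ K / (c * (‖q.2‖ - s)) ^ p)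
    (hK : 0 ≤ K) (hc : 0 < c) (hp : 1 < p) :
    AnalyticOnNhd ℂ (fun q : ℂ × ℂ => rayIntegral f q.1 q.2) U := by
  intro q₀ hq₀
  obtain ⟨R, hR, hdisc⟩ :=
    exists_polydisc_shift_subset hU hshift hpos hbound hK hc (by linarith) hq₀
  have htorus : ∀ (z : ℂ × ℂ) (θ₁ θ₂ : ℝ),
      (z.1 + circleMap 0 R θ₁, z.2 + circleMap 0 R θ₂) ∈ closedBall z (2 * R) := by
    intro z θ₁ θ₂
    rw [mem_closedBall, Prod.dist_eq, max_le_iff]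
    simp only [dist_self_add_left, norm_circleMap_zero, abs_of_pos hR]
    constructor <;> linarith
  have hsphere : ∀ (z : ℂ × ℂ), sphere z.1 R ×ˢ sphere z.2 R ⊆ closedBall z (2 * R) := by
    rintro z ⟨a, b⟩ ⟨ha, hb⟩
    rw [mem_sphere] at ha hb
    rw [mem_closedBall, Prod.dist_eq, max_le_iff]
    constructor <;> linarith
  refine analyticAt_integral_of_hasSum_doubleSeries (μ := volume.restrict (Iic 0))
    (G := fun (s : ℝ) (z : ℂ × ℂ) => f (z.1 + s) (z.2 + s))
    (a := fun (s : ℝ) k j => cauchyCoeff₂ f (q₀.1 + s) (q₀.2 + s) R k j)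
    (M := fun s : ℝ => K / (c * (‖q₀.2‖ / 2 - s)) ^ p) hR
    (integrableOn_Iic_div_mul_sub_rpow hc (by linarith [hpos q₀ hq₀]) hp K) (fun k j => ?_) ?_ ?_
  · have hcont := continuousOn_cauchyCoeff₂ (T := {z | ∀ θ₁ θ₂ : ℝ,
      (z.1 + circleMap 0 R θ₁, z.2 + circleMap 0 R θ₂) ∈ U}) hR hf.continuousOn
        (fun z hz => hz) k j
    exact (hcont.comp (f := fun s : ℝ => ((q₀.1 + s, q₀.2 + s) : ℂ × ℂ))
      (Continuous.continuousOn (by fun_prop))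
      fun s hs θ₁ θ₂ => (hdisc s hs _ (htorus _ θ₁ θ₂)).1).aestronglyMeasurable measurableSet_Iic
  · refine (ae_restrict_iff' measurableSet_Iic).2 (ae_of_all _ fun s hs k j => ?_)
    exact norm_cauchyCoeff₂_le hR (fun a ha b hb => (hdisc s hs (a, b) (hsphere _ ⟨ha, hb⟩)).2) k j
  · refine (ae_restrict_iff' measurableSet_Iic).2 (ae_of_all _ fun s hs v hv => ?_)
    have := hasSum_cauchyCoeff₂ hR (fun w hw => hf w (hdisc s hs w hw).1) hv
    convert this using 2 <;> simp only [Prod.fst_add, Prod.snd_add] <;> ring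

end RayIntegral

section Domain

variable {h θ r p Kf : ℝ} {f : ℂ → ℂ → ℂ}

lemma norm_snd_pos_of_mem_closure_Strip_prod_Dminus (hθ : 0 < θ) (hθπ : θ < π) (hr : 0 < r)
    {q : ℂ × ℂ} (hq : q ∈ closure (Strip h ×ˢ Dminus θ r)) : 0 < ‖q.2‖ := by
  rw [closure_prod_eq] at hq
  exact (mul_pos hr (Real.sin_pos_of_pos_of_lt_pi hθ hθπ)).trans_le
    (mul_sin_le_norm_of_mem_closure_Dminus hθ hθπ hr.le hq.2)

lemma norm_le_div_rpow_of_mem_closure (hθ : 0 < θ) (hθπ : θ < π) (hr : 0 < r)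
    (hfc : ContinuousOn (fun q : ℂ × ℂ => f q.1 q.2) (closure (Strip h ×ˢ Dminus θ r)))
    (hfb : ∀ φ ∈ Strip h, ∀ τ ∈ Dminus θ r, ‖f φ τ‖ ≤ Kf / ‖τ‖ ^ p) {q : ℂ × ℂ}
    (hq : q ∈ closure (Strip h ×ˢ Dminus θ r)) : ‖f q.1 q.2‖ ≤ Kf / ‖q.2‖ ^ p := by
  have hpos : ∀ q ∈ closure (Strip h ×ˢ Dminus θ r), 0 < ‖q.2‖ :=
    fun _ hq => norm_snd_pos_of_mem_closure_Strip_prod_Dminus hθ hθπ hr hq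
  refine le_on_closure (fun q hq => hfb _ hq.1 _ hq.2) hfc.norm ?_ hq
  refine continuousOn_const.div (fun q hq => ?_) fun q hq =>
    (Real.rpow_pos_of_pos (hpos q hq) p).ne'
  exact ((by fun_prop : Continuous fun q : ℂ × ℂ => ‖q.2‖).continuousAt.rpow_const
    (Or.inl (hpos q hq).ne')).continuousWithinAt

lemma norm_shift_le_of_mem_closure (hθ : 0 < θ) (hθπ : θ < π / 2) (hr : 0 < r) (hp : 0 ≤ p)
    (hKf : 0 ≤ Kf)
    (hfc : ContinuousOn (fun q : ℂ × ℂ => f q.1 q.2) (closure (Strip h ×ˢ Dminus θ r)))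
    (hfb : ∀ φ ∈ Strip h, ∀ τ ∈ Dminus θ r, ‖f φ τ‖ ≤ Kf / ‖τ‖ ^ p) {q : ℂ × ℂ}
    (hq : q ∈ closure (Strip h ×ˢ Dminus θ r)) {s : ℝ} (hs : s ≤ 0) :
    ‖f (q.1 + s) (q.2 + s)‖ ≤ Kf / (Real.sin θ / 4 * (‖q.2‖ - s)) ^ p := by
  have hθπ' : θ < π := by linarith [Real.pi_pos]
  have hsin := Real.sin_pos_of_pos_of_lt_pi hθ hθπ'
  have hq₂ := norm_snd_pos_of_mem_closure_Strip_prod_Dminus hθ hθπ' hr hq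
  have hpos : 0 < Real.sin θ / 4 * (‖q.2‖ - s) := mul_pos (by positivity) (by linarith)
  refine (norm_le_div_rpow_of_mem_closure hθ hθπ' hr hfc hfb
    (shift_mem_closure_Strip_prod_Dminus hθ hθπ hq hs)).trans ?_
  have hq2 : q.2 ∈ closure (Dminus θ r) := by
    rw [closure_prod_eq] at hq
    exact hq.2
  gcongr
  exact sin_div_four_mul_le_norm_add_ofReal_of_mem_closure hθ hθπ' hr.le hq2 hs

end Domain

theorem statement16_general (h θ : ℝ) (hθ : 0 < θ) (hθ4 : θ < Real.pi / 4)
    (p : ℝ) (hp : 2 ≤ p) :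
    ∃ K > (0:ℝ), ∀ r : ℝ, 1 < r → ∀ (f : ℂ → ℂ → ℂ) (Kf : ℝ), 0 < Kf →
      (∀ φ τ, f (φ + 2 * Real.pi) τ = f φ τ) →
      AnalyticOnNhd ℂ (fun q : ℂ × ℂ => f q.1 q.2) (Strip h ×ˢ Dminus θ r) →
      ContinuousOn (fun q : ℂ × ℂ => f q.1 q.2) (closure (Strip h ×ˢ Dminus θ r)) →
      (∀ φ ∈ Strip h, ∀ τ ∈ Dminus θ r, ‖f φ τ‖ ≤ Kf / ‖τ‖ ^ p) →
      ∃ u : ℂ → ℂ → ℂ,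
        (∀ φ ∈ Strip h, ∀ τ ∈ Dminus θ r,
          u φ τ = ∫ s in Set.Iic (0:ℝ), f (φ + (s:ℂ)) (τ + (s:ℂ))) ∧
        (∀ φ τ, u (φ + 2 * Real.pi) τ = u φ τ) ∧
        AnalyticOnNhd ℂ (fun q : ℂ × ℂ => u q.1 q.2) (Strip h ×ˢ Dminus θ r) ∧
        ContinuousOn (fun q : ℂ × ℂ => u q.1 q.2) (closure (Strip h ×ˢ Dminus θ r)) ∧
        ∀ φ ∈ Strip h, ∀ τ ∈ Dminus θ r,
          ‖u φ τ‖ ≤ K * Kf / ‖τ‖ ^ (p - 1) := by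
  have hθπ : θ < π / 2 := by linarith [Real.pi_pos]
  have hθπ' : θ < π := by linarith [Real.pi_pos]
  have hc : 0 < Real.sin θ / 4 := by
    have := Real.sin_pos_of_pos_of_lt_pi hθ hθπ'
    positivity
  have hp1 : 1 < p := by linarith
  refine ⟨1 / ((Real.sin θ / 4) ^ p * (p - 1)),
    one_div_pos.2 (mul_pos (Real.rpow_pos_of_pos hc p) (by linarith)), ?_⟩
  intro r hr f Kf hKf hper hfa hfc hfb
  have hpos : ∀ q ∈ closure (Strip h ×ˢ Dminus θ r), 0 < ‖q.2‖ :=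
    fun q hq => norm_snd_pos_of_mem_closure_Strip_prod_Dminus hθ hθπ' (by linarith) hq
  have hbound : ∀ q ∈ closure (Strip h ×ˢ Dminus θ r), ∀ s : ℝ, s ≤ 0 →
      ‖f (q.1 + s) (q.2 + s)‖ ≤ Kf / (Real.sin θ / 4 * (‖q.2‖ - s)) ^ p :=
    fun q hq s hs =>
      norm_shift_le_of_mem_closure hθ hθπ (by linarith) (by linarith) hKf.le hfc hfb hq hs
  refine ⟨rayIntegral f, fun _ _ _ _ => rfl, fun φ τ => ?_, ?_, ?_, fun φ hφ τ hτ => ?_⟩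
  · simp only [rayIntegral, add_right_comm φ (2 * π : ℂ), hper]
  · exact analyticOnNhd_rayIntegral ((isOpen_Strip h).prod (isOpen_Dminus hθ hθπ' r))
      (fun q hq s hs => shift_mem_Strip_prod_Dminus hθ hθπ hq hs) hfa
      (fun q hq => hpos q (subset_closure hq)) (fun q hq => hbound q (subset_closure hq))
      hKf.le hc hp1
  · exact continuousOn_rayIntegral
      (fun q hq s hs => shift_mem_closure_Strip_prod_Dminus hθ hθπ hq hs) hfc hpos hbound
      hKf.le hc hp1
  · have hq : ((φ, τ) : ℂ × ℂ) ∈ closure (Strip h ×ˢ Dminus θ r) := subset_closure ⟨hφ, hτ⟩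
    refine (norm_rayIntegral_le (q := (φ, τ)) hc hp1 (hpos _ hq) (hbound _ hq)).trans_eq ?_
    field_simp

theorem statement16 (h θ : ℝ) (hh : 0 < h) (hθ : 0 < θ) (hθ4 : θ < Real.pi / 4)
    (p : ℝ) (hp : 2 ≤ p) :
    ∃ K > (0:ℝ), ∀ r : ℝ, 1 < r → ∀ (f : ℂ → ℂ → ℂ) (Kf : ℝ), 0 < Kf →
      (∀ φ τ, f (φ + 2 * Real.pi) τ = f φ τ) →
      AnalyticOnNhd ℂ (fun q : ℂ × ℂ => f q.1 q.2) (Strip h ×ˢ Dminus θ r) →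
      ContinuousOn (fun q : ℂ × ℂ => f q.1 q.2) (closure (Strip h ×ˢ Dminus θ r)) →
      (∀ φ ∈ Strip h, ∀ τ ∈ Dminus θ r, ‖f φ τ‖ ≤ Kf / ‖τ‖ ^ p) →
      ∃ u : ℂ → ℂ → ℂ,
        (∀ φ ∈ Strip h, ∀ τ ∈ Dminus θ r,
          u φ τ = ∫ s in Set.Iic (0:ℝ), f (φ + (s:ℂ)) (τ + (s:ℂ))) ∧
        (∀ φ τ, u (φ + 2 * Real.pi) τ = u φ τ) ∧
        AnalyticOnNhd ℂ (fun q : ℂ × ℂ => u q.1 q.2) (Strip h ×ˢ Dminus θ r) ∧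
        ContinuousOn (fun q : ℂ × ℂ => u q.1 q.2) (closure (Strip h ×ˢ Dminus θ r)) ∧
        ∀ φ ∈ Strip h, ∀ τ ∈ Dminus θ r,
          ‖u φ τ‖ ≤ K * Kf / ‖τ‖ ^ (p - 1) :=
  statement16_general h θ hθ hθ4 p hp
end
end
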